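/- Let v = (1/√5)(1, 2) ∈ ℝ² and x = (1/2, 0). Then u = (1/√5)(1, 0) satisfies ⟪u, w − x⟫ ≤ d_a(w) − d_a(x) for all w in P = [0,1]×[0,1], where d_a is the length metric distance in X = ([0,1]×[−1,1]) ∪ ([0,1]×[−2,−1]) ∪ ([−1,0]×[−2,−1]) to the point a = (−1/2, −2); i.e., u is a subgradient at x of d_a restricted to P. -/

import Mathlib

/-!
The intrinsic distance dominates the Euclidean one, and `d_a(x) = ‖x - a‖ = √5` because the
segment from `x` to `a` stays in `X`. Hence the Euclidean subgradient `v = (x - a) / ‖x - a‖`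
of `‖· - a‖` at `x` is also a subgradient of `d_a` at `x`, and `u` is dominated by `v` on
`P - x` since they differ by a nonnegative multiple of `e₂` and `w₂ ≥ 0 = x₂` on `P`.
-/

open scoped ENNReal RealInnerProductSpace

/-- Intrinsic (shortest-path) distance inside a subset `X` of a Euclidean space,
as the infimum of lengths (total variations) of continuous paths in `X`. -/
noncomputable def pathDist {E : Type*} [NormedAddCommGroup E] [InnerProductSpace ℝ E]
    (X : Set E) (x y : E) : ℝ≥0∞ :=
  ⨅ (γ : ℝ → E) (_ : ContinuousOn γ (Set.Icc 0 1)) (_ : γ 0 = x) (_ : γ 1 = y)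
    (_ : ∀ t ∈ Set.Icc (0:ℝ) 1, γ t ∈ X), eVariationOn γ (Set.Icc 0 1)

open Set AffineMap

theorem eVariationOn_lineMap_le {E : Type*} [NormedAddCommGroup E] [NormedSpace ℝ E] (x y : E) :
    eVariationOn (lineMap x y : ℝ → E) (Icc 0 1) ≤ edist x y :=
  calc eVariationOn (lineMap x y ∘ id : ℝ → E) (Icc 0 1)
      ≤ nndist x y * eVariationOn id (Icc (0 : ℝ) 1) :=
        (lipschitzWith_lineMap x y).lipschitzOnWith.comp_eVariationOn_le (mapsTo_univ _ _)
    _ = edist x y := by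
        rw [← univ_inter (Icc _ _), monotoneOn_id.eVariationOn_eq (mem_univ _) (mem_univ _)]
        simp

theorem inner_inv_norm_smul_le_norm_sub_sub_norm_sub {E : Type*} [NormedAddCommGroup E]
    [InnerProductSpace ℝ E] (a x w : E) :
    ⟪‖x - a‖⁻¹ • (x - a), w - x⟫ ≤ ‖w - a‖ - ‖x - a‖ := by
  have hwx : w - x = (w - a) - (x - a) := by abel
  have hcs : ⟪x - a, w - a⟫ ≤ ‖x - a‖ * ‖w - a‖ := real_inner_le_norm _ _
  rw [hwx, real_inner_smul_left, inner_sub_right, real_inner_self_eq_norm_sq]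
  rcases (norm_nonneg (x - a)).eq_or_lt with h | h
  · simp [← h]
  · rw [inv_mul_le_iff₀ h]
    nlinarith

section pathDist

variable {E : Type*} [NormedAddCommGroup E] [InnerProductSpace ℝ E] {X : Set E} {x y z : E}

theorem edist_le_pathDist (X : Set E) (x y : E) : edist x y ≤ pathDist X x y :=
  le_iInf fun γ => le_iInf fun _ => le_iInf fun h0 => le_iInf fun h1 => le_iInf fun _ =>
    h0 ▸ h1 ▸
      eVariationOn.edist_le γ (left_mem_Icc.2 zero_le_one) (right_mem_Icc.2 zero_le_one)

theorem pathDist_le_eVariationOn {γ : ℝ → E} (hγ : ContinuousOn γ (Icc 0 1)) (h0 : γ 0 = x)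
    (h1 : γ 1 = y) (hX : ∀ t ∈ Icc (0 : ℝ) 1, γ t ∈ X) :
    pathDist X x y ≤ eVariationOn γ (Icc 0 1) :=
  iInf_le_of_le γ <| iInf_le_of_le hγ <| iInf_le_of_le h0 <| iInf_le_of_le h1 <| iInf_le _ hX

theorem pathDist_le_edist_add_edist (hxy : segment ℝ x y ⊆ X) (hyz : segment ℝ y z ⊆ X) :
    pathDist X x z ≤ edist x y + edist y z := by
  set γ : ℝ → E := fun t =>
    if t ≤ 1 / 2 then lineMap x y (2 * t) else lineMap y z (2 * t - 1)
  have hγ : Continuous γ :=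
    Continuous.if_le (by fun_prop) (by fun_prop) continuous_id continuous_const
      fun t ht => by simp [ht]
  have hX : ∀ t ∈ Icc (0 : ℝ) 1, γ t ∈ X := by
    rintro t ⟨ht0, ht1⟩
    by_cases ht : t ≤ 1 / 2
    · simp only [γ, if_pos ht]
      exact hxy (lineMap_mem_segment ℝ x y ⟨by linarith, by linarith⟩)
    · simp only [γ, if_neg ht]
      exact hyz (lineMap_mem_segment ℝ y z ⟨by linarith, by linarith⟩)
  have hfirst : eVariationOn γ (Icc 0 (1 / 2)) ≤ edist x y := by
    calc eVariationOn γ (Icc 0 (1 / 2))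
          = eVariationOn (lineMap x y ∘ (2 * ·)) (Icc 0 (1 / 2)) :=
          eVariationOn.eq_of_eqOn fun t ht => if_pos ht.2
      _ ≤ eVariationOn (lineMap x y) (Icc 0 1) :=
          eVariationOn.comp_le_of_monotoneOn _ _ (fun s _ t _ hst => by linarith)
            fun t ht => ⟨by linarith [ht.1], by linarith [ht.2]⟩
      _ ≤ edist x y := eVariationOn_lineMap_le x y
  have hsecond : eVariationOn γ (Icc (1 / 2) 1) ≤ edist y z := by
    calc eVariationOn γ (Icc (1 / 2) 1)
          = eVariationOn (lineMap y z ∘ (2 * · - 1)) (Icc (1 / 2) 1) :=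
          eVariationOn.eq_of_eqOn fun t ht => by
            rcases ht.1.eq_or_lt with rfl | h
            · simp [γ]
            · simp only [γ, Function.comp_apply, if_neg (not_le.2 h)]
      _ ≤ eVariationOn (lineMap y z) (Icc 0 1) :=
          eVariationOn.comp_le_of_monotoneOn _ _ (fun s _ t _ hst => by linarith)
            fun t ht => ⟨by linarith [ht.1], by linarith [ht.2]⟩
      _ ≤ edist y z := eVariationOn_lineMap_le y z
  calc pathDist X x z ≤ eVariationOn γ (Icc 0 1) :=
        pathDist_le_eVariationOn hγ.continuousOn (by simp [γ]) (by norm_num [γ]) hX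
    _ = eVariationOn γ (Icc 0 (1 / 2)) + eVariationOn γ (Icc (1 / 2) 1) := by
        rw [← eVariationOn.union γ (isGreatest_Icc (by norm_num)) (isLeast_Icc (by norm_num)),
          Icc_union_Icc_eq_Icc] <;> norm_num
    _ ≤ edist x y + edist y z := add_le_add hfirst hsecond

theorem pathDist_le_edist_of_mem_segment (hy : y ∈ segment ℝ x z) (hxy : segment ℝ x y ⊆ X)
    (hyz : segment ℝ y z ⊆ X) : pathDist X x z ≤ edist x z := by
  rw [edist_dist, ← dist_add_dist_of_mem_segment hy, ENNReal.ofReal_add dist_nonneg dist_nonneg,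
    ← edist_dist, ← edist_dist]
  exact pathDist_le_edist_add_edist hxy hyz

theorem dist_le_toReal_pathDist (h : pathDist X x y ≠ ⊤) :
    dist x y ≤ (pathDist X x y).toReal :=
  (ENNReal.ofReal_le_iff_le_toReal h).1 (edist_dist x y ▸ edist_le_pathDist X x y)

end pathDist

theorem convex_setOf_apply_mem_and_apply_mem {ι : Type*} [Fintype ι] {s t : Set ℝ}
    (hs : Convex ℝ s) (ht : Convex ℝ t) (i j : ι) :
    Convex ℝ {w : EuclideanSpace ℝ ι | w i ∈ s ∧ w j ∈ t} :=
  (hs.linear_preimage (EuclideanSpace.proj i).toLinearMap).inter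
    (ht.linear_preimage (EuclideanSpace.proj j).toLinearMap)

theorem stmt_15 :
    let X : Set (EuclideanSpace ℝ (Fin 2)) :=
      {w | w 0 ∈ Set.Icc (0:ℝ) 1 ∧ w 1 ∈ Set.Icc (-1:ℝ) 1} ∪
      {w | w 0 ∈ Set.Icc (0:ℝ) 1 ∧ w 1 ∈ Set.Icc (-2:ℝ) (-1)} ∪
      {w | w 0 ∈ Set.Icc (-1:ℝ) 0 ∧ w 1 ∈ Set.Icc (-2:ℝ) (-1)}
    let P : Set (EuclideanSpace ℝ (Fin 2)) :=
      {w | w 0 ∈ Set.Icc (0:ℝ) 1 ∧ w 1 ∈ Set.Icc (0:ℝ) 1}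
    let a : EuclideanSpace ℝ (Fin 2) := WithLp.toLp 2 (fun i : Fin 2 => if i = 0 then -(1/2) else -2)
    let x : EuclideanSpace ℝ (Fin 2) := WithLp.toLp 2 (fun i : Fin 2 => if i = 0 then 1/2 else 0)
    let u : EuclideanSpace ℝ (Fin 2) := WithLp.toLp 2 (fun i : Fin 2 => if i = 0 then 1 / Real.sqrt 5 else 0)
    ∀ w ∈ P, ⟪u, w - x⟫ ≤ (pathDist X w a).toReal - (pathDist X x a).toReal := by
  intro X P a x u w ⟨hw0, hw1⟩
  set R₁ : Set (EuclideanSpace ℝ (Fin 2)) :=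
    {w | w 0 ∈ Icc (0:ℝ) 1 ∧ w 1 ∈ Icc (-1:ℝ) 1}
  set R₃ : Set (EuclideanSpace ℝ (Fin 2)) :=
    {w | w 0 ∈ Icc (-1:ℝ) 0 ∧ w 1 ∈ Icc (-2:ℝ) (-1)}
  have hR₁ : Convex ℝ R₁ :=
    convex_setOf_apply_mem_and_apply_mem (convex_Icc _ _) (convex_Icc _ _) _ _
  have hR₃ : Convex ℝ R₃ :=
    convex_setOf_apply_mem_and_apply_mem (convex_Icc _ _) (convex_Icc _ _) _ _
  -- The segment from `x` to `a` passes from `R₁` into `R₃` at its midpoint, the corner (0, -1).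
  set m := midpoint ℝ x a
  have hm : m 0 = 0 ∧ m 1 = -1 := by norm_num [m, midpoint_eq_smul_add, x, a]
  have hxm : segment ℝ x m ⊆ X :=
    (hR₁.segment_subset (by norm_num [R₁, x]) (by norm_num [R₁, hm])).trans
      (subset_union_left.trans subset_union_left)
  have hwm : segment ℝ w m ⊆ X :=
    (hR₁.segment_subset ⟨hw0, by linarith [hw1.1], hw1.2⟩ (by norm_num [R₁, hm])).trans
      (subset_union_left.trans subset_union_left)
  have hma : segment ℝ m a ⊆ X :=
    (hR₃.segment_subset (by norm_num [R₃, hm]) (by norm_num [R₃, a])).trans subset_union_right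
  have hxa : (pathDist X x a).toReal ≤ dist x a :=
    ENNReal.toReal_le_of_le_ofReal dist_nonneg <| edist_dist x a ▸
      pathDist_le_edist_of_mem_segment (midpoint_mem_segment x a) hxm hma
  have hwa : dist w a ≤ (pathDist X w a).toReal :=
    dist_le_toReal_pathDist <|
      ne_top_of_le_ne_top (by finiteness) (pathDist_le_edist_add_edist hwm hma)
  have huv : ⟪u, w - x⟫ ≤ ⟪‖x - a‖⁻¹ • (x - a), w - x⟫ := by
    have hxa_norm : ‖x - a‖ = √5 := by
      norm_num [EuclideanSpace.norm_eq, x, a, Fin.sum_univ_two]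
    rw [hxa_norm]
    norm_num [PiLp.inner_apply, Fin.sum_univ_two, u, x, a, hw1.1]
  calc ⟪u, w - x⟫ ≤ ⟪‖x - a‖⁻¹ • (x - a), w - x⟫ := huv
    _ ≤ ‖w - a‖ - ‖x - a‖ := inner_inv_norm_smul_le_norm_sub_sub_norm_sub a x w
    _ ≤ _ := by rw [← dist_eq_norm, ← dist_eq_norm]; linarith
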